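/- Let K be a field extension of k such that the number of k-algebra homomorphisms from F to K equals dim_k F. Then for every c ∈ F³, all x, y ∈ F² and all φ, ψ ∈ (F →ₐ[k] K), one has Π(φ,ψ)(x ⋆_c y) = Σ_{χ ∈ (F →ₐ[k] K)} Π(φ,χ)(x) · Π(φ,χ,ψ)(c) · Π(χ,ψ)(y). (That is, the evaluation map Ψ₁ sending t ∈ F² to the function (φ,ψ) ↦ Π(φ,ψ)(t) is multiplicative from A(F,c) to the algebra of functions on pairs of homomorphisms with Brauer-factor-set multiplication determined by c.) -/

import Mathlib

open TensorProduct

universe u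

variable (k F : Type u) [Field k] [CommRing F] [Algebra k F]

/-- `ε₀ : F ⊗ F → F ⊗ F ⊗ F`, `x ⊗ y ↦ 1 ⊗ x ⊗ y`. -/
noncomputable def eps0 : F ⊗[k] F →ₐ[k] F ⊗[k] (F ⊗[k] F) :=
  Algebra.TensorProduct.includeRight

/-- `ε₁ : F ⊗ F → F ⊗ F ⊗ F`, `x ⊗ y ↦ x ⊗ 1 ⊗ y`. -/
noncomputable def eps1 : F ⊗[k] F →ₐ[k] F ⊗[k] (F ⊗[k] F) :=
  Algebra.TensorProduct.map (AlgHom.id k F) Algebra.TensorProduct.includeRight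

/-- `ε₂ : F ⊗ F → F ⊗ F ⊗ F`, `x ⊗ y ↦ x ⊗ y ⊗ 1`. -/
noncomputable def eps2 : F ⊗[k] F →ₐ[k] F ⊗[k] (F ⊗[k] F) :=
  Algebra.TensorProduct.map (AlgHom.id k F) Algebra.TensorProduct.includeLeft

/-- `F³` regarded as an `F²`-algebra via `ε₁`. -/
noncomputable instance : Algebra (F ⊗[k] F) (F ⊗[k] (F ⊗[k] F)) :=
  (eps1 k F).toRingHom.toAlgebra

/-- The trace of `F³` as an `F²`-algebra (via `ε₁`). -/
noncomputable def trF3 : F ⊗[k] (F ⊗[k] F) →ₗ[F ⊗[k] F] F ⊗[k] F :=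
  Algebra.trace (F ⊗[k] F) (F ⊗[k] (F ⊗[k] F))

/-- The Brauer-factor-set multiplication `⋆_c` on `F²` attached to `c ∈ F³`,
`x ⋆_c y = Tr(ε₂(x)·c·ε₀(y))`. The `k`-vector space `F²` with this multiplication
is the algebra `A(F,c)`. -/
noncomputable def starMul (c : F ⊗[k] (F ⊗[k] F)) (x y : F ⊗[k] F) : F ⊗[k] F :=
  trF3 k F (eps2 k F x * c * eps0 k F y)

/-!
Via `ε₁`, `F³` is the base change `F² ⊗[k] F` of `F` (the middle factor becoming the
fibre), so `Tr(a ⊗ b ⊗ d) = (a ⊗ d) · Tr_{F/k}(b)`. Since `#(F →ₐ[k] K) = dim_k F`, the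
evaluation `K ⊗[k] F → K^{Hom(F,K)}` is an isomorphism of `K`-algebras, whence
`Tr_{F/k}(b) = ∑_χ χ(b)` in `K`. Applying `Π(φ,ψ)` gives `Π(φ,ψ)(Tr z) = ∑_χ Π(φ,χ,ψ)(z)`,
and the theorem follows from multiplicativity of `Π(φ,χ,ψ)` together with
`Π(φ,χ,ψ) ∘ ε₂ = Π(φ,χ)` and `Π(φ,χ,ψ) ∘ ε₀ = Π(χ,ψ)`.
-/

namespace Algebra

lemma trace_pi_apply (K ι : Type*) [Field K] [Fintype ι] [DecidableEq ι] (v : ι → K) :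
    trace K (ι → K) v = ∑ i, v i := by
  rw [trace_eq_matrix_trace (Pi.basisFun K ι), Matrix.trace]
  congr 1
  ext i
  simp [leftMulMatrix_apply]

lemma trace_tmul (R S A : Type*) [CommRing R] [CommRing S] [CommRing A] [Algebra R S]
    [Algebra R A] [Module.Free R A] [Module.Finite R A] (s : S) (a : A) :
    trace S (S ⊗[R] A) (s ⊗ₜ a) = s * algebraMap R S (trace R A a) := by
  have hsmul : s ⊗ₜ[R] a = s • (1 ⊗ₜ[R] a : S ⊗[R] A) := by
    rw [TensorProduct.smul_tmul', smul_eq_mul, mul_one]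
  rw [hsmul, map_smul, smul_eq_mul, trace_apply, ← baseChange_lmul,
    LinearMap.trace_baseChange, trace_apply]

end Algebra

section SplitTrace

variable (K A L : Type*) [Field K] [CommRing A] [Algebra K A] [Field L] [Algebra K L]

noncomputable def evalAlgHoms : L ⊗[K] A →ₐ[L] ((A →ₐ[K] L) → L) :=
  AlgHom.pi fun σ => Algebra.TensorProduct.productLeftAlgHom (AlgHom.id L L) σ

@[simp]
lemma evalAlgHoms_tmul (a : L) (x : A) : evalAlgHoms K A L (a ⊗ₜ x) = fun σ => a * σ x := by
  ext σ
  simp [evalAlgHoms]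

variable [FiniteDimensional K A] [Fintype (A →ₐ[K] L)]

/- By Dedekind's independence of characters the `σ`, extended `L`-linearly to `L ⊗[K] A`, are
linearly independent in the dual; counting, they span it, so nothing nonzero is killed by all. -/
lemma evalAlgHoms_injective (hcard : Fintype.card (A →ₐ[K] L) = Module.finrank K A) :
    Function.Injective (evalAlgHoms K A L) := by
  let coord (σ : A →ₐ[K] L) : L ⊗[K] A →ₐ[L] L :=
    Algebra.TensorProduct.productLeftAlgHom (AlgHom.id L L) σ
  have hcoord_inj : Function.Injective coord := fun σ τ h => by
    ext x
    simpa [coord] using DFunLike.congr_fun h (1 ⊗ₜ x)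
  have hli : LinearIndependent L fun σ => (coord σ).toLinearMap :=
    (linearIndependent_algHom_toLinearMap L (L ⊗[K] A) L).comp _ hcoord_inj
  have hspan : Submodule.span L (Set.range fun σ => (coord σ).toLinearMap) = ⊤ :=
    hli.span_eq_top_of_card_eq_finrank'
      (by rw [Subspace.dual_finrank_eq, Module.finrank_baseChange, hcard])
  rw [injective_iff_map_eq_zero]
  intro a ha
  have ha' : a ∈ (⊤ : Submodule L (Module.Dual L (L ⊗[K] A))).dualCoannihilator := by
    rw [← hspan, ← SetLike.mem_coe, Submodule.coe_dualCoannihilator_span]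
    rintro _ ⟨σ, rfl⟩
    exact congrFun ha σ
  simpa using ha'

lemma evalAlgHoms_bijective (hcard : Fintype.card (A →ₐ[K] L) = Module.finrank K A) :
    Function.Bijective (evalAlgHoms K A L) := by
  have hinj := evalAlgHoms_injective K A L hcard
  refine ⟨hinj, ?_⟩
  refine (LinearMap.injective_iff_surjective_of_finrank_eq_finrank
    (f := (evalAlgHoms K A L).toLinearMap) ?_).mp hinj
  rw [Module.finrank_baseChange, Module.finrank_pi, hcard]

lemma algebraMap_trace_eq_sum_algHom (hcard : Fintype.card (A →ₐ[K] L) = Module.finrank K A)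
    (b : A) : algebraMap K L (Algebra.trace K A b) = ∑ σ : A →ₐ[K] L, σ b := by
  classical
  let e := AlgEquiv.ofBijective _ (evalAlgHoms_bijective K A L hcard)
  calc algebraMap K L (Algebra.trace K A b)
      = Algebra.trace L (L ⊗[K] A) (1 ⊗ₜ b) := by rw [Algebra.trace_tmul, one_mul]
    _ = Algebra.trace L ((A →ₐ[K] L) → L) (e (1 ⊗ₜ b)) :=
      (Algebra.trace_eq_of_algEquiv e _).symm
    _ = ∑ σ : A →ₐ[K] L, σ b := by simp [e, Algebra.trace_pi_apply]

end SplitTrace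

section TripleTensor

open Algebra.TensorProduct

noncomputable def tripleTensorEquiv : F ⊗[k] (F ⊗[k] F) ≃ₐ[k] (F ⊗[k] F) ⊗[k] F :=
  (Algebra.TensorProduct.congr AlgEquiv.refl (Algebra.TensorProduct.comm k F F)).trans
    (Algebra.TensorProduct.assoc k k k F F F).symm

@[simp]
lemma tripleTensorEquiv_tmul (a b d : F) :
    tripleTensorEquiv k F (a ⊗ₜ (b ⊗ₜ d)) = (a ⊗ₜ d) ⊗ₜ b := by
  simp [tripleTensorEquiv, assoc_symm_tmul]

lemma tripleTensorEquiv_eps1 (s : F ⊗[k] F) :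
    tripleTensorEquiv k F (eps1 k F s) = s ⊗ₜ (1 : F) := by
  have h : (tripleTensorEquiv k F).toAlgHom.comp (eps1 k F) = includeLeft := by
    ext <;> simp [eps1]
  exact DFunLike.congr_fun h s

noncomputable def tripleTensorEquivOver :
    F ⊗[k] (F ⊗[k] F) ≃ₐ[F ⊗[k] F] (F ⊗[k] F) ⊗[k] F :=
  AlgEquiv.ofRingEquiv (f := (tripleTensorEquiv k F).toRingEquiv) (tripleTensorEquiv_eps1 k F)

lemma trF3_tmul [FiniteDimensional k F] (a b d : F) :
    trF3 k F (a ⊗ₜ (b ⊗ₜ d)) =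
      (a ⊗ₜ d) * algebraMap k (F ⊗[k] F) (Algebra.trace k F b) := by
  have h : tripleTensorEquivOver k F (a ⊗ₜ (b ⊗ₜ d)) = (a ⊗ₜ d) ⊗ₜ b :=
    tripleTensorEquiv_tmul k F a b d
  rw [trF3, ← Algebra.trace_eq_of_algEquiv (tripleTensorEquivOver k F), h, Algebra.trace_tmul]

variable {k F} {K : Type*} [Field K] [Algebra k K]

lemma productMap_trF3 [FiniteDimensional k F] [Fintype (F →ₐ[k] K)]
    (hcard : Fintype.card (F →ₐ[k] K) = Module.finrank k F) (φ ψ : F →ₐ[k] K)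
    (z : F ⊗[k] (F ⊗[k] F)) :
    productMap φ ψ (trF3 k F z) = ∑ χ : F →ₐ[k] K, productMap φ (productMap χ ψ) z := by
  induction z with
  | zero => simp
  | add z w hz hw => simp only [map_add, hz, hw, Finset.sum_add_distrib]
  | tmul a w =>
    induction w with
    | zero => simp
    | add u v hu hv => simp only [tmul_add, map_add, hu, hv, Finset.sum_add_distrib]
    | tmul b d =>
      rw [trF3_tmul, map_mul, AlgHom.commutes, algebraMap_trace_eq_sum_algHom k F K hcard,
        Finset.mul_sum]
      refine Finset.sum_congr rfl fun χ _ => ?_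
      simp only [productMap_apply_tmul]
      ring

lemma productMap_productMap_eps2 (φ χ ψ : F →ₐ[k] K) (x : F ⊗[k] F) :
    productMap φ (productMap χ ψ) (eps2 k F x) = productMap φ χ x := by
  have h : (productMap φ (productMap χ ψ)).comp (eps2 k F) = productMap φ χ := by
    ext <;> simp [eps2]
  exact DFunLike.congr_fun h x

lemma productMap_productMap_eps0 (φ χ ψ : F →ₐ[k] K) (y : F ⊗[k] F) :
    productMap φ (productMap χ ψ) (eps0 k F y) = productMap χ ψ y := by
  have h : (productMap φ (productMap χ ψ)).comp (eps0 k F) = productMap χ ψ := by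
    ext <;> simp [eps0]
  exact DFunLike.congr_fun h y

end TripleTensor

theorem productMap_starMul [FiniteDimensional k F]
    (K : Type u) [Field K] [Algebra k K] [Fintype (F →ₐ[k] K)]
    (hcard : Fintype.card (F →ₐ[k] K) = Module.finrank k F)
    (c : F ⊗[k] (F ⊗[k] F)) (x y : F ⊗[k] F) (φ ψ : F →ₐ[k] K) :
    Algebra.TensorProduct.productMap φ ψ (starMul k F c x y) =
      ∑ χ : F →ₐ[k] K,
        Algebra.TensorProduct.productMap φ χ x *
          Algebra.TensorProduct.productMap φ (Algebra.TensorProduct.productMap χ ψ) c *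
          Algebra.TensorProduct.productMap χ ψ y := by
  rw [starMul, productMap_trF3 hcard]
  refine Finset.sum_congr rfl fun χ _ => ?_
  rw [map_mul, map_mul, productMap_productMap_eps2, productMap_productMap_eps0]
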